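/- arXiv:1912.10136 — 2 statements merged into one kernel-verified Lean document; each statement's English description precedes it below -/
import Mathlib

section
/- Let S be a set, ψ : S → ℝ and f : S → ℝ bounded functions, and (Y_k)_{k=1}^K symmetric real random variables (jointly: the random vector (Y_1,...,Y_K) has the same law as (-Y_1,...,-Y_K)), and φ : S → ℝ^K. Assume that for all s, s' ∈ S, ψ(s) - ψ(s') ≤ E|∑_{k=1}^K Y_k(φ(s)_k - φ(s')_k)|. Then E[sup_{s∈S} (ε ψ(s) + f(s))] ≤ E[sup_{s∈S} (∑_{k=1}^K Y_k φ(s)_k + f(s))], where ε is a Rademacher random variable (uniform on {-1,+1}) independent of (Y_k), and all suprema are assumed finite and measurable. -/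
/-!
Since `ε = ±1` almost surely, the left side is the average of `⨆ s, ψ s + f s` and
`⨆ s, -ψ s + f s`, so it suffices to bound `ψ s - ψ s' + f s + f s'` by twice the right side.
With `G v = ⨆ t, v ⬝ᵥ φ t + f t`, testing the suprema `G Y` and `G (-Y)` at `s` and `s'` gives
`|Y ⬝ᵥ (φ s - φ s')| + f s + f s' ≤ G Y + G (-Y)`. Taking expectations, the domination hypothesis
turns the left side into an upper bound for `ψ s - ψ s' + f s + f s'`, and since `Y` and `-Y` have
the same law, the right side becomes `2 E[G Y]`.
-/

open MeasureTheory ProbabilityTheory Set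

theorem abs_sub_add_add_le_iSup_add_iSup {S : Type*} {a f : S → ℝ}
    (h₁ : BddAbove (range fun t => a t + f t)) (h₂ : BddAbove (range fun t => -a t + f t))
    (s s' : S) : |a s - a s'| + f s + f s' ≤ (⨆ t, a t + f t) + ⨆ t, -a t + f t := by
  have := le_ciSup h₁ s
  have := le_ciSup h₁ s'
  have := le_ciSup h₂ s
  have := le_ciSup h₂ s'
  rw [add_assoc, ← le_sub_iff_add_le, abs_sub_le_iff]
  constructor <;> linarith

section Measurability

variable {E ι : Type*} [TopologicalSpace E] [MeasurableSpace E] [OpensMeasurableSpace E]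
  {F : ι → E → ℝ}

theorem measurableSet_bddAbove_range_of_continuous (hF : ∀ i, Continuous (F i)) :
    MeasurableSet {x | BddAbove (range fun i => F i x)} := by
  have : {x | BddAbove (range fun i => F i x)} = ⋃ n : ℕ, ⋂ i, {x | F i x ≤ n} := by
    ext x
    simp only [mem_ofPred_eq, mem_iUnion, mem_iInter, bddAbove_def, forall_mem_range]
    exact ⟨fun ⟨C, hC⟩ => (exists_nat_ge C).imp fun n hn i => (hC i).trans hn,
      fun ⟨n, hn⟩ => ⟨n, hn⟩⟩
  rw [this]
  exact .iUnion fun n =>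
    (isClosed_iInter fun i => isClosed_le (hF i) continuous_const).measurableSet

theorem measurable_iSup_of_continuous [Nonempty ι] (hF : ∀ i, Continuous (F i)) :
    Measurable fun x => ⨆ i, F i x := by
  refine measurable_of_Iic fun c => ?_
  -- off the set where the family is bounded above, `⨆` over `ℝ` takes the junk value `0`
  have : (fun x => ⨆ i, F i x) ⁻¹' Iic c =
      {x | BddAbove (range fun i => F i x)} ∩ (⋂ i, {x | F i x ≤ c}) ∪
        {x | BddAbove (range fun i => F i x)}ᶜ ∩ {_x | 0 ≤ c} := by
    ext x
    by_cases hx : BddAbove (range fun i => F i x)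
    · simp [hx, ciSup_le_iff hx]
    · simp only [mem_preimage, mem_Iic, Real.iSup_of_not_bddAbove hx]
      simp [hx]
  rw [this]
  have hB := measurableSet_bddAbove_range_of_continuous hF
  have hle : MeasurableSet (⋂ i, {x | F i x ≤ c}) :=
    (isClosed_iInter fun i => isClosed_le (hF i) continuous_const).measurableSet
  exact (hB.inter hle).union (hB.compl.inter (.const _))

end Measurability

section Rademacher

variable {Ω : Type*} [MeasurableSpace Ω] {μ : Measure Ω} [IsProbabilityMeasure μ] {ε : Ω → ℝ}

theorem ae_eq_one_or_eq_neg_one (hε : Measurable ε) (h₁ : μ {ω | ε ω = 1} = 1 / 2)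
    (h₂ : μ {ω | ε ω = -1} = 1 / 2) : ∀ᵐ ω ∂μ, ε ω = 1 ∨ ε ω = -1 := by
  have hm : MeasurableSet {ω | ε ω = -1} := hε (measurableSet_singleton _)
  have hdisj : Disjoint {ω | ε ω = 1} {ω | ε ω = -1} :=
    disjoint_left.2 fun ω (h : ε ω = 1) (h' : ε ω = -1) => by norm_num [h] at h'
  rw [ae_iff_measure_eq, ofPred_or, measure_union hdisj hm, h₁, h₂, ENNReal.add_halves,
    measure_univ]
  exact (hε (measurableSet_singleton 1) |>.union hm).nullMeasurableSet

theorem integral_comp_of_rademacher (hε : Measurable ε) (h₁ : μ {ω | ε ω = 1} = 1 / 2)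
    (h₂ : μ {ω | ε ω = -1} = 1 / 2) (g : ℝ → ℝ) :
    ∫ ω, g (ε ω) ∂μ = (g 1 + g (-1)) / 2 := by
  have hm₁ : MeasurableSet {ω | ε ω = 1} := hε (measurableSet_singleton _)
  have hm₂ : MeasurableSet {ω | ε ω = -1} := hε (measurableSet_singleton _)
  have hsplit : (fun ω => g (ε ω)) =ᵐ[μ]
      {ω | ε ω = 1}.indicator (fun _ => g 1) + {ω | ε ω = -1}.indicator (fun _ => g (-1)) := by
    filter_upwards [ae_eq_one_or_eq_neg_one hε h₁ h₂] with ω hω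
    rcases hω with h | h <;> norm_num [indicator, h]
  rw [integral_congr_ae hsplit, Pi.add_def, integral_add ((integrable_const _).indicator hm₁)
    ((integrable_const _).indicator hm₂), integral_indicator_const _ hm₁,
    integral_indicator_const _ hm₂, measureReal_def, measureReal_def, h₁, h₂]
  norm_num
  ring

end Rademacher

section Symmetric

variable {Ω : Type*} [MeasurableSpace Ω] {μ : Measure Ω} [IsProbabilityMeasure μ]
  {S ι : Type*} [Nonempty S] [Fintype ι] {φ : S → ι → ℝ} {f : S → ℝ} {X : Ω → ι → ℝ}

theorem integral_abs_dotProduct_sub_add_add_le (hX : IdentDistrib X (-X) μ μ)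
    (hbdd : ∀ ω, BddAbove (range fun t => X ω ⬝ᵥ φ t + f t))
    (hint : Integrable (fun ω => ⨆ t, X ω ⬝ᵥ φ t + f t) μ) (s s' : S) :
    (∫ ω, |X ω ⬝ᵥ (φ s - φ s')| ∂μ) + f s + f s' ≤ 2 * ∫ ω, ⨆ t, X ω ⬝ᵥ φ t + f t ∂μ := by
  have hcont : ∀ t, Continuous fun v : ι → ℝ => v ⬝ᵥ φ t + f t := fun t =>
    (continuous_id.dotProduct continuous_const).add continuous_const
  set G : (ι → ℝ) → ℝ := fun v => ⨆ t, v ⬝ᵥ φ t + f t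
  have hG : IdentDistrib (G ∘ X) (G ∘ (-X)) μ μ := hX.comp (measurable_iSup_of_continuous hcont)
  have hbdd_neg : ∀ᵐ ω ∂μ, BddAbove (range fun t => -X ω ⬝ᵥ φ t + f t) :=
    hX.ae_snd (measurableSet_bddAbove_range_of_continuous hcont) (ae_of_all _ hbdd)
  have hint_pos : Integrable (fun ω => G (X ω)) μ := hint
  have hint_neg : Integrable (fun ω => G (-X ω)) μ := hG.integrable_snd hint
  have hpt : ∀ᵐ ω ∂μ, |X ω ⬝ᵥ (φ s - φ s')| ≤ G (X ω) + G (-X ω) - (f s + f s') := by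
    filter_upwards [hbdd_neg] with ω hω
    simp only [neg_dotProduct] at hω
    have := abs_sub_add_add_le_iSup_add_iSup (hbdd ω) hω s s'
    simp only [G, neg_dotProduct, dotProduct_sub]
    linarith
  have hneg : ∫ ω, G (X ω) ∂μ = ∫ ω, G (-X ω) ∂μ := hG.integral_eq
  have hint_add : Integrable (fun ω => G (X ω) + G (-X ω)) μ := hint_pos.add hint_neg
  have hdom : Integrable (fun ω => G (X ω) + G (-X ω) - (f s + f s')) μ :=
    hint_add.sub (integrable_const _)
  have hsum : ∫ ω, G (X ω) + G (-X ω) - (f s + f s') ∂μ =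
      2 * (∫ ω, G (X ω) ∂μ) - (f s + f s') := by
    rw [integral_sub hint_add (integrable_const _), integral_add hint_pos hint_neg,
      integral_const, probReal_univ, one_smul, ← hneg]
    ring
  show _ ≤ 2 * ∫ ω, G (X ω) ∂μ
  linarith [integral_mono_of_nonneg (ae_of_all _ fun ω => abs_nonneg _) hdom hpt]

end Symmetric

theorem stmt5_general
    {Ω : Type*} [MeasurableSpace Ω] (μ : Measure Ω) [IsProbabilityMeasure μ]
    {S : Type*} [Nonempty S] (ψ f : S → ℝ)
    (K : ℕ) (Y : Fin K → Ω → ℝ) (hYmeas : ∀ k, Measurable (Y k))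
    -- joint symmetry: `(Y 1, …, Y K)` has the same law as `(-Y 1, …, -Y K)`
    (hsymm : Measure.map (fun ω (k : Fin K) => Y k ω) μ
        = Measure.map (fun ω (k : Fin K) => -(Y k ω)) μ)
    (φ : S → Fin K → ℝ)
    (ε : Ω → ℝ) (hεmeas : Measurable ε)
    -- `ε` is a Rademacher variable
    (hε1 : μ {ω | ε ω = 1} = 1 / 2) (hε2 : μ {ω | ε ω = -1} = 1 / 2)
    -- the Lipschitz-type domination hypothesis
    (hlip : ∀ s s' : S, ψ s - ψ s' ≤ ∫ ω, |∑ k, Y k ω * (φ s k - φ s' k)| ∂μ)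
    -- the suprema are finite and the integrands are integrable
    (hbdd2 : ∀ ω, BddAbove (Set.range fun s => (∑ k, Y k ω * φ s k) + f s))
    (hint2 : Integrable (fun ω => ⨆ s, ((∑ k, Y k ω * φ s k) + f s)) μ) :
    ∫ ω, (⨆ s, (ε ω * ψ s + f s)) ∂μ
      ≤ ∫ ω, (⨆ s, ((∑ k, Y k ω * φ s k) + f s)) ∂μ := by
  have hYvec : Measurable fun ω (k : Fin K) => Y k ω := measurable_pi_lambda _ hYmeas
  have hX : IdentDistrib (fun ω (k : Fin K) => Y k ω) (-fun ω (k : Fin K) => Y k ω) μ μ :=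
    ⟨hYvec.aemeasurable, hYvec.neg.aemeasurable, hsymm⟩
  have hpair : ∀ s s', (ψ s + f s) + (-ψ s' + f s') ≤
      2 * ∫ ω, (⨆ s, ((∑ k, Y k ω * φ s k) + f s)) ∂μ := fun s s' =>
    calc (ψ s + f s) + (-ψ s' + f s') = ψ s - ψ s' + f s + f s' := by ring
      _ ≤ _ := by gcongr; exact hlip s s'
      _ ≤ _ := integral_abs_dotProduct_sub_add_add_le hX hbdd2 hint2 s s'
  rw [integral_comp_of_rademacher hεmeas hε1 hε2 fun t => ⨆ s, t * ψ s + f s]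
  simp only [one_mul, neg_one_mul]
  linarith [ciSup_add_ciSup_le hpair]

/-- One-step contraction lemma: if `ψ(s) - ψ(s') ≤ E|∑ k, Y k (φ s k - φ s' k)|` for all
`s, s'`, with `(Y k)` jointly symmetric and `ε` an independent Rademacher variable, then
`E sup_s (ε ψ(s) + f(s)) ≤ E sup_s (∑ k, Y k φ(s) k + f(s))`. -/
theorem stmt5
    {Ω : Type*} [MeasurableSpace Ω] (μ : Measure Ω) [IsProbabilityMeasure μ]
    {S : Type*} [Nonempty S] (ψ f : S → ℝ)
    (hψ : ∃ C : ℝ, ∀ s, |ψ s| ≤ C) (hf : ∃ C : ℝ, ∀ s, |f s| ≤ C)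
    (K : ℕ) (Y : Fin K → Ω → ℝ) (hYmeas : ∀ k, Measurable (Y k))
    -- joint symmetry: `(Y 1, …, Y K)` has the same law as `(-Y 1, …, -Y K)`
    (hsymm : Measure.map (fun ω (k : Fin K) => Y k ω) μ
        = Measure.map (fun ω (k : Fin K) => -(Y k ω)) μ)
    (φ : S → Fin K → ℝ)
    (ε : Ω → ℝ) (hεmeas : Measurable ε)
    -- `ε` is a Rademacher variable
    (hε1 : μ {ω | ε ω = 1} = 1 / 2) (hε2 : μ {ω | ε ω = -1} = 1 / 2)
    -- independent of `(Y k)`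
    (hindep : IndepFun ε (fun ω (k : Fin K) => Y k ω) μ)
    -- the Lipschitz-type domination hypothesis
    (hlip : ∀ s s' : S, ψ s - ψ s' ≤ ∫ ω, |∑ k, Y k ω * (φ s k - φ s' k)| ∂μ)
    -- the suprema are finite and the integrands are integrable
    (hbdd1 : ∀ ω, BddAbove (Set.range fun s => ε ω * ψ s + f s))
    (hbdd2 : ∀ ω, BddAbove (Set.range fun s => (∑ k, Y k ω * φ s k) + f s))
    (hint1 : Integrable (fun ω => ⨆ s, (ε ω * ψ s + f s)) μ)
    (hint2 : Integrable (fun ω => ⨆ s, ((∑ k, Y k ω * φ s k) + f s)) μ) :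
    ∫ ω, (⨆ s, (ε ω * ψ s + f s)) ∂μ
      ≤ ∫ ω, (⨆ s, ((∑ k, Y k ω * φ s k) + f s)) ∂μ :=
  stmt5_general μ ψ f K Y hYmeas hsymm φ ε hεmeas hε1 hε2 hlip hbdd2 hint2
end

section
/- Let S be a set, n ∈ ℕ, and for 1 ≤ i ≤ n let ψ_i : S → ℝ, φ_i : S → ℝ^K. Let (Y_{ik}) be i.i.d. symmetric integrable random variables and (ε_i) independent Rademacher variables, all mutually independent. Assume for all i and all s, s' ∈ S: ψ_i(s) - ψ_i(s') ≤ E|∑_k Y_{1k}(φ_i(s)_k - φ_i(s')_k)| (expectation over one row of Y's). Then E[sup_{s∈S} ∑_{i=1}^n ε_i ψ_i(s)] ≤ E[sup_{s∈S} ∑_{i=1}^n ∑_{k=1}^K Y_{ik} φ_i(s)_k], assuming all suprema are finite and measurable. -/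
/-!
The Rademacher terms `ε i * ψ i s` are replaced by the row sums `∑ k, Y i k * φ i s k` one row
at a time. Conditionally on all the other variables, replacing row `m` compares
`(sup (a + ψ m) + sup (a - ψ m)) / 2` with `E sup (a + u)`, where `u s = ∑ k, Y m k * φ m s k`:
evaluating at the maximisers `s, s'` of the two suprema, the domination hypothesis bounds
`ψ m s - ψ m s'` by `E |u s - u s'|`, and `a s + a s' + |u s - u s'| ≤ sup (a + u) + sup (a - u)`,
whose two terms have the same expectation because the row `(Y m k)_k` is symmetric.
Since `ε` takes only finitely many sign patterns, the supremum over `S` is within `δ` of a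
supremum over a finite set, which keeps every intermediate supremum integrable.
-/

open MeasureTheory ProbabilityTheory Finset

section Rademacher

variable {Ω : Type*} [MeasurableSpace Ω] {μ : Measure Ω} [IsProbabilityMeasure μ]
  {e : Ω → ℝ}

theorem ae_eq_one_or_eq_neg_one_s8 (he : Measurable e)
    (h1 : μ {ω | e ω = 1} = 1 / 2) (h2 : μ {ω | e ω = -1} = 1 / 2) :
    ∀ᵐ ω ∂μ, e ω = 1 ∨ e ω = -1 := by
  have hdisj : Disjoint {ω | e ω = 1} {ω | e ω = -1} :=
    Set.disjoint_left.2 fun ω (h : e ω = 1) (h' : e ω = -1) => by norm_num [h] at h'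
  have hunion : μ ({ω | e ω = 1} ∪ {ω | e ω = -1}) = 1 := by
    rw [measure_union hdisj (he (measurableSet_singleton _)), h1, h2, ENNReal.add_halves]
  exact (prob_compl_eq_zero_iff
    ((he (measurableSet_singleton _)).union (he (measurableSet_singleton _)))).2 hunion

theorem integral_comp_of_rademacher_s8 (he : Measurable e)
    (h1 : μ {ω | e ω = 1} = 1 / 2) (h2 : μ {ω | e ω = -1} = 1 / 2) {f : ℝ → ℝ}
    (hf : Measurable f) :
    ∫ ω, f (e ω) ∂μ = (f 1 + f (-1)) / 2 := by
  have hae : ∀ᵐ x ∂μ.map e, x ∈ (({1, -1} : Finset ℝ) : Set ℝ) := by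
    rw [ae_map_iff he.aemeasurable (by measurability)]
    filter_upwards [ae_eq_one_or_eq_neg_one_s8 he h1 h2] with ω hω
    simpa using hω
  have hρ (x : ℝ) (hx : μ {ω | e ω = x} = 1 / 2) : (μ.map e).real {x} = 1 / 2 := by
    rw [measureReal_def, Measure.map_apply he (measurableSet_singleton x)]
    exact (congrArg ENNReal.toReal hx).trans (by norm_num)
  have hint : IntegrableOn f (({1, -1} : Finset ℝ) : Set ℝ) (μ.map e) := by
    rw [Finset.coe_pair, Set.insert_eq]
    exact (integrableOn_singleton (f := f)).union integrableOn_singleton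
  rw [← integral_map he.aemeasurable hf.aestronglyMeasurable,
    ← Measure.restrict_eq_self_of_ae_mem hae, setIntegral_finset _ hint,
    Finset.sum_pair (by norm_num), hρ 1 h1, hρ (-1) h2]
  simp only [smul_eq_mul]; ring

theorem integrable_of_rademacher (he : Measurable e)
    (h1 : μ {ω | e ω = 1} = 1 / 2) (h2 : μ {ω | e ω = -1} = 1 / 2) : Integrable e μ := by
  refine .of_mem_Icc (-1) 1 he.aemeasurable ?_
  filter_upwards [ae_eq_one_or_eq_neg_one_s8 he h1 h2] with ω hω
  rcases hω with hω | hω <;> norm_num [hω]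

end Rademacher

section Resample

variable {Ω ι β : Type*} [MeasurableSpace Ω] {μ : Measure Ω} [IsProbabilityMeasure μ]
  [MeasurableSpace β] [DecidableEq ι] {X : ι → Ω → β}

theorem measurable_piecewise_prod (hXm : ∀ i, Measurable (X i)) (J : Finset ι) :
    Measurable fun p : Ω × Ω => J.piecewise (X · p.2) (X · p.1) := by
  refine measurable_pi_lambda _ fun i => ?_
  by_cases hi : i ∈ J
  · simp only [J.piecewise_eq_of_mem _ _ hi]; exact (hXm i).comp measurable_snd
  · simp only [J.piecewise_eq_of_notMem _ _ hi]; exact (hXm i).comp measurable_fst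

theorem ProbabilityTheory.iIndepFun.map_piecewise_prod [Fintype ι] (hX : iIndepFun X μ)
    (hXm : ∀ i, Measurable (X i)) (J : Finset ι) :
    (μ.prod μ).map (fun p => J.piecewise (X · p.2) (X · p.1)) = μ.map (fun ω => (X · ω)) := by
  rw [hX.map_fun_eq_pi_map fun i => (hXm i).aemeasurable]
  refine (Measure.pi_eq fun s hs => ?_).symm
  have hpre : (fun p : Ω × Ω => J.piecewise (X · p.2) (X · p.1)) ⁻¹' Set.univ.pi s
      = (⋂ i ∈ Jᶜ, X i ⁻¹' s i) ×ˢ (⋂ i ∈ J, X i ⁻¹' s i) := by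
    ext p
    simp only [Set.mem_preimage, Set.mem_univ_pi, Set.mem_prod, Set.mem_iInter, mem_compl]
    refine ⟨fun h => ⟨fun i hi => ?_, fun i hi => ?_⟩, fun h i => ?_⟩
    · simpa [hi] using h i
    · simpa [hi] using h i
    · by_cases hi : i ∈ J
      · simpa [hi] using h.2 i hi
      · simpa [hi] using h.1 i hi
  rw [Measure.map_apply (measurable_piecewise_prod hXm J) (.univ_pi hs), hpre, Measure.prod_prod,
    hX.meas_biInter fun i _ => ⟨s i, hs i, rfl⟩, hX.meas_biInter fun i _ => ⟨s i, hs i, rfl⟩,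
    prod_compl_mul_prod]
  exact Finset.prod_congr rfl fun i _ => (Measure.map_apply (hXm i) (hs i)).symm

theorem ProbabilityTheory.iIndepFun.integral_mono_of_resample [Fintype ι] (hX : iIndepFun X μ)
    (hXm : ∀ i, Measurable (X i)) (J : Finset ι) {F G : (ι → β) → ℝ} (hF : Measurable F)
    (hG : Measurable G)
    (hFi : Integrable (fun ω => F (X · ω)) μ) (hGi : Integrable (fun ω => G (X · ω)) μ)
    (h : ∀ ω', ∫ ω, F (J.piecewise (X · ω) (X · ω')) ∂μ
      ≤ ∫ ω, G (J.piecewise (X · ω) (X · ω')) ∂μ) :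
    ∫ ω, F (X · ω) ∂μ ≤ ∫ ω, G (X · ω) ∂μ := by
  have hXv : Measurable fun ω => (X · ω) := measurable_pi_lambda _ hXm
  have hpw := measurable_piecewise_prod hXm J
  have resample : ∀ H : (ι → β) → ℝ, Measurable H → Integrable (fun ω => H (X · ω)) μ →
      Integrable (fun p : Ω × Ω => H (J.piecewise (X · p.2) (X · p.1))) (μ.prod μ) ∧
      ∫ ω, H (X · ω) ∂μ = ∫ ω', ∫ ω, H (J.piecewise (X · ω) (X · ω')) ∂μ ∂μ := by
    intro H hH hHi
    have hHi' : Integrable H ((μ.prod μ).map fun p => J.piecewise (X · p.2) (X · p.1)) := by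
      rw [hX.map_piecewise_prod hXm J]
      exact (integrable_map_measure hH.aestronglyMeasurable hXv.aemeasurable).2 hHi
    have hHp : Integrable (fun p : Ω × Ω => H (J.piecewise (X · p.2) (X · p.1))) (μ.prod μ) :=
      (integrable_map_measure hH.aestronglyMeasurable hpw.aemeasurable).1 hHi'
    refine ⟨hHp, ?_⟩
    rw [← integral_map hXv.aemeasurable hH.aestronglyMeasurable, ← hX.map_piecewise_prod hXm J,
      integral_map hpw.aemeasurable hH.aestronglyMeasurable]
    exact integral_prod _ hHp
  obtain ⟨hFp, hFeq⟩ := resample F hF hFi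
  obtain ⟨hGp, hGeq⟩ := resample G hG hGi
  rw [hFeq, hGeq]
  exact integral_mono hFp.integral_prod_left hGp.integral_prod_left h

end Resample

section FiniteSup

variable {Ω S : Type*} [MeasurableSpace Ω] {μ : Measure Ω} {F : Finset S} (hF : F.Nonempty)

theorem Finset.measurable_sup'_apply {f : S → Ω → ℝ} (hf : ∀ s ∈ F, Measurable (f s)) :
    Measurable fun ω => F.sup' hF (f · ω) := by
  convert Finset.measurable_sup' hF hf using 1
  ext ω
  rw [Finset.sup'_apply]

theorem Finset.integrable_sup'_apply {f : S → Ω → ℝ} (hf : ∀ s ∈ F, Integrable (f s) μ) :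
    Integrable (fun ω => F.sup' hF (f · ω)) μ := by
  convert Finset.sup'_induction hF f (p := fun g => Integrable g μ) (fun _ h _ h' => h.sup h') hf
    using 1
  ext ω
  rw [Finset.sup'_apply]

theorem sup'_add_sup'_sub_le_two_mul_integral [IsProbabilityMeasure μ] {a c : S → ℝ}
    {u : S → Ω → ℝ} (hu : ∀ s ∈ F, Integrable (u s) μ)
    (hsymm : ∫ ω, F.sup' hF (fun s => a s - u s ω) ∂μ = ∫ ω, F.sup' hF (fun s => a s + u s ω) ∂μ)
    (hlip : ∀ s ∈ F, ∀ s' ∈ F, c s - c s' ≤ ∫ ω, |u s ω - u s' ω| ∂μ) :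
    F.sup' hF (fun s => a s + c s) + F.sup' hF (fun s => a s - c s)
      ≤ 2 * ∫ ω, F.sup' hF (fun s => a s + u s ω) ∂μ := by
  obtain ⟨s, hs, hs_eq⟩ := F.exists_mem_eq_sup' hF fun s => a s + c s
  obtain ⟨s', hs', hs'_eq⟩ := F.exists_mem_eq_sup' hF fun s => a s - c s
  have hplus : Integrable (fun ω => F.sup' hF fun t => a t + u t ω) μ :=
    Finset.integrable_sup'_apply hF fun t ht => (integrable_const (a t)).add (hu t ht)
  have hminus : Integrable (fun ω => F.sup' hF fun t => a t - u t ω) μ :=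
    Finset.integrable_sup'_apply hF fun t ht => (integrable_const (a t)).sub (hu t ht)
  have habs : Integrable (fun ω => |u s ω - u s' ω|) μ := ((hu s hs).sub (hu s' hs')).abs
  have hpt (ω : Ω) : a s + a s' + |u s ω - u s' ω|
      ≤ F.sup' hF (fun t => a t + u t ω) + F.sup' hF (fun t => a t - u t ω) := by
    have h₁ := F.le_sup' (fun t => a t + u t ω) hs
    have h₂ := F.le_sup' (fun t => a t + u t ω) hs'
    have h₃ := F.le_sup' (fun t => a t - u t ω) hs
    have h₄ := F.le_sup' (fun t => a t - u t ω) hs'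
    rw [← le_sub_iff_add_le', abs_sub_le_iff]
    constructor <;> linarith
  calc F.sup' hF (fun s => a s + c s) + F.sup' hF (fun s => a s - c s)
      = a s + a s' + (c s - c s') := by rw [hs_eq, hs'_eq]; ring
    _ ≤ a s + a s' + ∫ ω, |u s ω - u s' ω| ∂μ := by gcongr; exact hlip s hs s' hs'
    _ = ∫ ω, (a s + a s' + |u s ω - u s' ω|) ∂μ := by
      rw [integral_add (integrable_const _) habs, integral_const, probReal_univ, one_smul]
    _ ≤ ∫ ω, (F.sup' hF (fun t => a t + u t ω) + F.sup' hF (fun t => a t - u t ω)) ∂μ :=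
      integral_mono ((integrable_const _).add habs) (hplus.add hminus) hpt
    _ = 2 * ∫ ω, F.sup' hF (fun s => a s + u s ω) ∂μ := by
      rw [integral_add hplus hminus, hsymm]; ring

theorem integral_sup'_rademacher_le [IsProbabilityMeasure μ] {κ : Type*} [Fintype κ]
    {e : Ω → ℝ} (he : Measurable e)
    (h1 : μ {ω | e ω = 1} = 1 / 2) (h2 : μ {ω | e ω = -1} = 1 / 2)
    {Z : κ → Ω → ℝ} (hZi : ∀ k, Integrable (Z k) μ)
    (hZsymm : IdentDistrib (fun ω => (Z · ω)) (fun ω => (-Z · ω)) μ μ)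
    {a c : S → ℝ} {φ : S → κ → ℝ}
    (hlip : ∀ s ∈ F, ∀ s' ∈ F, c s - c s' ≤ ∫ ω, |∑ k, Z k ω * (φ s k - φ s' k)| ∂μ) :
    ∫ ω, F.sup' hF (fun s => a s + e ω * c s) ∂μ
      ≤ ∫ ω, F.sup' hF (fun s => a s + ∑ k, Z k ω * φ s k) ∂μ := by
  have hg : Measurable fun z : κ → ℝ => F.sup' hF fun s => a s + ∑ k, z k * φ s k :=
    Finset.measurable_sup'_apply hF fun s _ => by fun_prop
  have hsymm : ∫ ω, F.sup' hF (fun s => a s - ∑ k, Z k ω * φ s k) ∂μ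
      = ∫ ω, F.sup' hF (fun s => a s + ∑ k, Z k ω * φ s k) ∂μ := by
    simpa only [Function.comp_def, neg_mul, sum_neg_distrib, ← sub_eq_add_neg]
      using (hZsymm.comp hg).integral_eq.symm
  have hcore := sup'_add_sup'_sub_le_two_mul_integral hF (a := a) (c := c)
    (fun s _ => integrable_finsetSum _ fun k _ => (hZi k).mul_const (φ s k)) hsymm
    (by simpa only [← mul_sub, ← sum_sub_distrib] using hlip)
  rw [integral_comp_of_rademacher_s8 he h1 h2 (f := fun x => F.sup' hF fun s => a s + x * c s)
    (Finset.measurable_sup'_apply hF fun s _ => by fun_prop)]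
  simp only [one_mul, neg_one_mul, ← sub_eq_add_neg]
  linarith

end FiniteSup

theorem exists_finset_ciSup_le_sup'_add {α S : Type*} [Nonempty S] (T : Finset α)
    (f : α → S → ℝ) {δ : ℝ} (hδ : 0 < δ) :
    ∃ (F : Finset S) (hF : F.Nonempty),
      ∀ t ∈ T, BddAbove (Set.range (f t)) → ⨆ s, f t s ≤ F.sup' hF (f t) + δ := by
  classical
  have hnear (t : α) : ∃ s, BddAbove (Set.range (f t)) → ⨆ s, f t s < f t s + δ := by
    by_cases hbdd : BddAbove (Set.range (f t))
    · obtain ⟨s, hs⟩ := exists_lt_of_lt_ciSup (sub_lt_self (⨆ s, f t s) hδ)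
      exact ⟨s, fun _ => by linarith⟩
    · exact ⟨Classical.arbitrary S, fun h => absurd h hbdd⟩
  choose g hg using hnear
  refine ⟨insert (Classical.arbitrary S) (T.image g), insert_nonempty _ _, fun t ht hbdd => ?_⟩
  have := le_sup' (f t) (mem_insert_of_mem (s := T.image g) (b := Classical.arbitrary S)
    (mem_image_of_mem g ht))
  linarith [hg t hbdd]

section Hybrid

variable {S : Type*} {n K : ℕ} (ψ : Fin n → S → ℝ) (φ : Fin n → S → Fin K → ℝ)

/-- The coordinate `.inl i` carries `ε i` and `.inr (i, k)` carries `Y i k`; the rows `i < M`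
contribute `∑ k, Y i k * φ i s k`, the others `ε i * ψ i s`. -/
def hybridTerm (M : ℕ) (x : Fin n ⊕ Fin n × Fin K → ℝ) (s : S) (i : Fin n) : ℝ :=
  if (i : ℕ) < M then ∑ k, x (.inr (i, k)) * φ i s k else x (.inl i) * ψ i s

theorem measurable_hybridTerm (M : ℕ) (s : S) (i : Fin n) :
    Measurable fun x => hybridTerm ψ φ M x s i := by
  unfold hybridTerm
  split_ifs <;> fun_prop

theorem hybridTerm_succ_of_ne {m : ℕ} {i : Fin n} (hi : (i : ℕ) ≠ m) (x) (s : S) :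
    hybridTerm ψ φ (m + 1) x s i = hybridTerm ψ φ m x s i := by
  simp only [hybridTerm, Nat.lt_succ_iff_lt_or_eq, hi, or_false]

def rowCoords (m : Fin n) : Finset (Fin n ⊕ Fin n × Fin K) :=
  univ.filter fun j => Sum.elim id Prod.fst j = m

theorem hybridTerm_piecewise (M : ℕ) (m : Fin n) (x v : Fin n ⊕ Fin n × Fin K → ℝ) (s : S)
    (i : Fin n) :
    hybridTerm ψ φ M ((rowCoords m).piecewise x v) s i
      = if i = m then hybridTerm ψ φ M x s i else hybridTerm ψ φ M v s i := by
  by_cases hi : i = m <;> simp [hybridTerm, rowCoords, Finset.piecewise, hi]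

end Hybrid

section Contraction

variable {Ω S : Type*} [MeasurableSpace Ω] {μ : Measure Ω} {n K : ℕ}
  (ψ : Fin n → S → ℝ) (φ : Fin n → S → Fin K → ℝ) {Y : Fin n → Fin K → Ω → ℝ}
  {ε : Fin n → Ω → ℝ} {F : Finset S} (hF : F.Nonempty)

def jointFamily (ε : Fin n → Ω → ℝ) (Y : Fin n → Fin K → Ω → ℝ) :
    Fin n ⊕ Fin n × Fin K → Ω → ℝ :=
  Sum.elim ε fun q => Y q.1 q.2

theorem integrable_sup'_hybridTerm (hYint : ∀ i k, Integrable (Y i k) μ)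
    (hεint : ∀ i, Integrable (ε i) μ) (M : ℕ) :
    Integrable (fun ω => F.sup' hF fun s => ∑ i, hybridTerm ψ φ M (jointFamily ε Y · ω) s i) μ :=
  Finset.integrable_sup'_apply hF fun s _ => integrable_finsetSum _ fun i _ => by
    unfold hybridTerm
    split_ifs
    · exact integrable_finsetSum _ fun k _ => (hYint i k).mul_const _
    · exact (hεint i).mul_const _

theorem integral_sup'_hybridTerm_le_succ [IsProbabilityMeasure μ]
    (hYmeas : ∀ i k, Measurable (Y i k)) (hεmeas : ∀ i, Measurable (ε i))
    (hsymm : ∀ i k, IdentDistrib (Y i k) (fun ω => -(Y i k ω)) μ μ)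
    (hYint : ∀ i k, Integrable (Y i k) μ)
    (hε1 : ∀ i, μ {ω | ε i ω = 1} = 1 / 2) (hε2 : ∀ i, μ {ω | ε i ω = -1} = 1 / 2)
    (hindep : iIndepFun (jointFamily ε Y) μ)
    (hlip : ∀ i, ∀ s s' : S,
      ψ i s - ψ i s' ≤ ∫ ω, |∑ k, Y i k ω * (φ i s k - φ i s' k)| ∂μ) (m : ℕ) :
    ∫ ω, F.sup' hF (fun s => ∑ i, hybridTerm ψ φ m (jointFamily ε Y · ω) s i) ∂μ
      ≤ ∫ ω, F.sup' hF (fun s => ∑ i, hybridTerm ψ φ (m + 1) (jointFamily ε Y · ω) s i) ∂μ := by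
  classical
  by_cases hm : m < n
  swap
  · simp only [hybridTerm_succ_of_ne ψ φ (fun h : _ = m => hm (h ▸ Fin.is_lt _)), le_refl]
  set m' : Fin n := ⟨m, hm⟩
  have hεint i := integrable_of_rademacher (hεmeas i) (hε1 i) (hε2 i)
  have hXmeas : ∀ j, Measurable (jointFamily ε Y j) := Sum.rec hεmeas fun q => hYmeas q.1 q.2
  refine hindep.integral_mono_of_resample hXmeas (rowCoords m')
    (Finset.measurable_sup'_apply hF fun s _ =>
      Finset.measurable_sum _ fun i _ => measurable_hybridTerm ψ φ m s i)
    (Finset.measurable_sup'_apply hF fun s _ =>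
      Finset.measurable_sum _ fun i _ => measurable_hybridTerm ψ φ (m + 1) s i)
    (integrable_sup'_hybridTerm ψ φ hF hYint hεint m)
    (integrable_sup'_hybridTerm ψ φ hF hYint hεint (m + 1)) fun ω' => ?_
  have hsplit (M : ℕ) (x : Fin n ⊕ Fin n × Fin K → ℝ) (s : S) :
      ∑ i, hybridTerm ψ φ M
        ((rowCoords m').piecewise x (jointFamily ε Y · ω')) s i
      = ∑ i ∈ univ.erase m', hybridTerm ψ φ M (jointFamily ε Y · ω') s i
        + hybridTerm ψ φ M x s m' := by
    rw [← sum_erase_add _ _ (mem_univ m'), hybridTerm_piecewise, if_pos rfl]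
    congr 1
    exact sum_congr rfl fun i hi => by rw [hybridTerm_piecewise, if_neg (ne_of_mem_erase hi)]
  have hrest (s : S) : ∑ i ∈ univ.erase m', hybridTerm ψ φ (m + 1) (jointFamily ε Y · ω') s i
      = ∑ i ∈ univ.erase m', hybridTerm ψ φ m (jointFamily ε Y · ω') s i :=
    sum_congr rfl fun i hi => hybridTerm_succ_of_ne ψ φ
      (fun h => ne_of_mem_erase hi (Fin.ext h)) _ s
  have hrow : iIndepFun (Y m') μ :=
    hindep.precomp (g := fun k => Sum.inr (m', k)) fun k k' h => by simpa using h
  have hold (x : Fin n ⊕ Fin n × Fin K → ℝ) (s : S) :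
      hybridTerm ψ φ m x s m' = x (.inl m') * ψ m' s := if_neg (lt_irrefl m)
  have hnew (x : Fin n ⊕ Fin n × Fin K → ℝ) (s : S) :
      hybridTerm ψ φ (m + 1) x s m' = ∑ k, x (.inr (m', k)) * φ m' s k := if_pos (lt_add_one m)
  simp only [hsplit, hrest, hold, hnew]
  exact integral_sup'_rademacher_le hF (hεmeas m') (hε1 m') (hε2 m') (hYint m')
    (IdentDistrib.pi (hsymm m') hrow (hrow.comp _ fun _ => measurable_neg))
    fun s _ s' _ => hlip m' s s'

end Contraction

theorem stmt8_general
    {Ω : Type*} [MeasurableSpace Ω] (μ : Measure Ω) [IsProbabilityMeasure μ]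
    {S : Type*} [Nonempty S] (n K : ℕ)
    (ψ : Fin n → S → ℝ) (φ : Fin n → S → Fin K → ℝ)
    (Y : Fin n → Fin K → Ω → ℝ) (ε : Fin n → Ω → ℝ)
    (hYmeas : ∀ i k, Measurable (Y i k)) (hεmeas : ∀ i, Measurable (ε i))
    (hsymm : ∀ i k, IdentDistrib (Y i k) (fun ω => -(Y i k ω)) μ μ)
    (hYint : ∀ i k, Integrable (Y i k) μ)
    -- the `ε i` are Rademacher variables
    (hε1 : ∀ i, μ {ω | ε i ω = 1} = 1 / 2) (hε2 : ∀ i, μ {ω | ε i ω = -1} = 1 / 2)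
    -- all the variables `Y i k` and `ε i` are mutually independent
    (hindep : iIndepFun
      (fun j : Fin n ⊕ Fin n × Fin K => Sum.elim ε (fun q => Y q.1 q.2) j) μ)
    -- the Lipschitz-type domination hypothesis (the expectation over one row of `Y`'s)
    (hlip : ∀ i, ∀ s s' : S,
      ψ i s - ψ i s' ≤ ∫ ω, |∑ k, Y i k ω * (φ i s k - φ i s' k)| ∂μ)
    -- the suprema are finite and measurable (integrable)
    (hbdd1 : ∀ ω, BddAbove (Set.range fun s => ∑ i, ε i ω * ψ i s))
    (hbdd2 : ∀ ω, BddAbove (Set.range fun s => ∑ i, ∑ k, Y i k ω * φ i s k))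
    (hint1 : Integrable (fun ω => ⨆ s, ∑ i, ε i ω * ψ i s) μ)
    (hint2 : Integrable (fun ω => ⨆ s, ∑ i, ∑ k, Y i k ω * φ i s k) μ) :
    ∫ ω, (⨆ s, ∑ i, ε i ω * ψ i s) ∂μ
      ≤ ∫ ω, (⨆ s, ∑ i, ∑ k, Y i k ω * φ i s k) ∂μ := by
  set signs := Fintype.piFinset fun _ : Fin n => ({1, -1} : Finset ℝ)
  have hsigns : ∀ᵐ ω ∂μ, (ε · ω) ∈ signs := by
    simpa [signs, Fintype.mem_piFinset] using
      ae_all_iff.2 fun i => ae_eq_one_or_eq_neg_one_s8 (hεmeas i) (hε1 i) (hε2 i)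
  have hεint i := integrable_of_rademacher (hεmeas i) (hε1 i) (hε2 i)
  refine le_of_forall_pos_le_add fun δ hδ => ?_
  obtain ⟨F, hF, hFδ⟩ := exists_finset_ciSup_le_sup'_add signs (fun t s => ∑ i, t i * ψ i s) hδ
  set H : ℕ → Ω → ℝ := fun M ω =>
    F.sup' hF fun s => ∑ i, hybridTerm ψ φ M (jointFamily ε Y · ω) s i
  have hH M : Integrable (H M) μ := integrable_sup'_hybridTerm ψ φ hF hYint hεint M
  have hmono : Monotone fun M => ∫ ω, H M ω ∂μ := monotone_nat_of_le_succ
    (integral_sup'_hybridTerm_le_succ ψ φ hF hYmeas hεmeas hsymm hYint hε1 hε2 hindep hlip)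
  calc ∫ ω, (⨆ s, ∑ i, ε i ω * ψ i s) ∂μ
      ≤ ∫ ω, (H 0 ω + δ) ∂μ := by
        refine integral_mono_ae hint1 ((hH 0).add (integrable_const δ)) ?_
        filter_upwards [hsigns] with ω hω
        simpa [H, hybridTerm, jointFamily] using hFδ _ hω (hbdd1 ω)
    _ = ∫ ω, H 0 ω ∂μ + δ := by
        rw [integral_add (hH 0) (integrable_const δ), integral_const]; simp
    _ ≤ ∫ ω, H n ω ∂μ + δ := add_le_add_left (hmono (Nat.zero_le n)) δ
    _ ≤ ∫ ω, (⨆ s, ∑ i, ∑ k, Y i k ω * φ i s k) ∂μ + δ := by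
        refine add_le_add_left (integral_mono (hH n) hint2 fun ω => ?_) δ
        refine sup'_le hF _ fun s _ => ?_
        simpa [hybridTerm, jointFamily] using le_ciSup (hbdd2 ω) s

/-- Finite-dimensional core of the vector-contraction inequality: if `(Y i k)` are i.i.d.
symmetric integrable variables, `(ε i)` independent Rademacher variables, all mutually
independent, and `ψ i s - ψ i s' ≤ E|∑ k, Y i k (φ i s k - φ i s' k)|`, then
`E sup_s ∑ i, ε i ψ i s ≤ E sup_s ∑ i k, Y i k φ i s k`. -/
theorem stmt8
    {Ω : Type*} [MeasurableSpace Ω] (μ : Measure Ω) [IsProbabilityMeasure μ]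
    {S : Type*} [Nonempty S] (n K : ℕ)
    (ψ : Fin n → S → ℝ) (φ : Fin n → S → Fin K → ℝ)
    (Y : Fin n → Fin K → Ω → ℝ) (ε : Fin n → Ω → ℝ)
    (hYmeas : ∀ i k, Measurable (Y i k)) (hεmeas : ∀ i, Measurable (ε i))
    -- the `Y i k` are identically distributed and symmetric
    (hident : ∀ i k i' k', IdentDistrib (Y i k) (Y i' k') μ μ)
    (hsymm : ∀ i k, IdentDistrib (Y i k) (fun ω => -(Y i k ω)) μ μ)
    (hYint : ∀ i k, Integrable (Y i k) μ)
    -- the `ε i` are Rademacher variables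
    (hε1 : ∀ i, μ {ω | ε i ω = 1} = 1 / 2) (hε2 : ∀ i, μ {ω | ε i ω = -1} = 1 / 2)
    -- all the variables `Y i k` and `ε i` are mutually independent
    (hindep : iIndepFun
      (fun j : Fin n ⊕ Fin n × Fin K => Sum.elim ε (fun q => Y q.1 q.2) j) μ)
    -- the Lipschitz-type domination hypothesis (the expectation over one row of `Y`'s)
    (hlip : ∀ i, ∀ s s' : S,
      ψ i s - ψ i s' ≤ ∫ ω, |∑ k, Y i k ω * (φ i s k - φ i s' k)| ∂μ)
    -- the suprema are finite and measurable (integrable)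
    (hbdd1 : ∀ ω, BddAbove (Set.range fun s => ∑ i, ε i ω * ψ i s))
    (hbdd2 : ∀ ω, BddAbove (Set.range fun s => ∑ i, ∑ k, Y i k ω * φ i s k))
    (hint1 : Integrable (fun ω => ⨆ s, ∑ i, ε i ω * ψ i s) μ)
    (hint2 : Integrable (fun ω => ⨆ s, ∑ i, ∑ k, Y i k ω * φ i s k) μ) :
    ∫ ω, (⨆ s, ∑ i, ε i ω * ψ i s) ∂μ
      ≤ ∫ ω, (⨆ s, ∑ i, ∑ k, Y i k ω * φ i s k) ∂μ :=
  stmt8_general μ n K ψ φ Y ε hYmeas hεmeas hsymm hYint hε1 hε2 hindep hlip hbdd1 hbdd2 hint1 hint2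
end
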